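/- arXiv:1607.00804 — 3 statements merged into one kernel-verified Lean document; each statement's English description precedes it below -/
import Mathlib

section
/- Let T be a rooted, locally finite, infinite tree with root x₀ and with no leaves. Let B^n_T(x₀) be the set of finite connected subsets B of vertices of T with x₀ ∈ B whose external vertex boundary ∂^ext_v(B) = {x ∈ V∖B : x is adjacent to some vertex of B} has exactly n elements. Then there is a bijection between B^n_T(x₀) and F^n_T(x₀), the set of contours of T of size n whose finite component contains x₀; explicitly, the map sending a contour C to its finite component I_C is a bijection from F^n_T(x₀) onto B^n_T(x₀). -/
open SimpleGraph

/-- The `d`-ary tree: vertices are finite words over `Fin d`, the root is `[]`,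
and each vertex `l` is adjacent to its `d` children `a :: l`. -/
def daryTree (d : ℕ) : SimpleGraph (List (Fin d)) where
  Adj x y := (∃ a, y = a :: x) ∨ (∃ a, x = a :: y)
  symm := by
    constructor
    intro x y h
    rcases h with ⟨a, ha⟩ | ⟨a, ha⟩
    · exact Or.inr ⟨a, ha⟩
    · exact Or.inl ⟨a, ha⟩
  loopless := by
    constructor
    intro x h
    rcases h with ⟨a, ha⟩ | ⟨a, ha⟩ <;>
    · apply_fun List.length at ha
      simp at ha

/-- `C` is a contour of `G`: a finite set of edges whose deletion leaves exactly one
finite connected component, minimal with this property. -/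
def IsContour {V : Type*} (G : SimpleGraph V) (C : Set (Sym2 V)) : Prop :=
  C.Finite ∧ C ⊆ G.edgeSet ∧
    (∃! K : (G.deleteEdges C).ConnectedComponent, K.supp.Finite) ∧
    ∀ e ∈ C, ∀ K : (G.deleteEdges (C \ {e})).ConnectedComponent, ¬ K.supp.Finite

/-- `I` is the (unique) finite connected component `I_C` of `G \ C`. -/
def IsInterior {V : Type*} (G : SimpleGraph V) (C : Set (Sym2 V)) (I : Set V) : Prop :=
  I.Finite ∧ ∃ K : (G.deleteEdges C).ConnectedComponent, K.supp = I

/-- `F^n_G(x)`: the set of contours of `G` of size `n` whose finite component contains `x`. -/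
def contours {V : Type*} (G : SimpleGraph V) (x : V) (n : ℕ) : Set (Set (Sym2 V)) :=
  {C | IsContour G C ∧ C.ncard = n ∧
    ((G.deleteEdges C).connectedComponentMk x).supp.Finite}

/-- Rooted contours: contours in `F^n_G(x)` containing an edge incident with `x`. -/
def rootedContours {V : Type*} (G : SimpleGraph V) (x : V) (n : ℕ) : Set (Set (Sym2 V)) :=
  {C | C ∈ contours G x n ∧ ∃ e ∈ C, x ∈ e}

/-- `G` has an infinite independent path: a one-sided infinite path all of whose
vertices other than possibly the initial one have degree two in `G`. -/
def HasInfiniteIndependentPath {V : Type*} (G : SimpleGraph V) : Prop :=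
  ∃ f : ℕ → V, Function.Injective f ∧ (∀ i, G.Adj (f i) (f (i + 1))) ∧
    ∀ i, 1 ≤ i → (G.neighborSet (f i)).ncard = 2


/-! A contour `C` is, by minimality, exactly the set of edges leaving its finite component `I_C`,
so `C ↦ I_C` is injective; conversely, deleting the edge boundary `∂B` of a connected `B ∋ x₀`
leaves `B` as the component of `x₀`. In a tree two edges of `∂B` never share their outer endpoint
(they would close a cycle through `B`), so `|∂B|` is the size of the external vertex boundary.
Finally `∂B` is a contour: in a finite component `K ≠ B` of `T ∖ ∂B`, the vertex `w` farthest
from `x₀` has a neighbour farther still (there are no leaves), which must lie in `B`; but the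
path inside `B` from `x₀` to that neighbour passes through `w`. -/

namespace SimpleGraph

variable {V : Type*} {G : SimpleGraph V}

def edgeBoundary (G : SimpleGraph V) (B : Set V) : Set (Sym2 V) :=
  {e | ∃ u ∈ B, ∃ v ∉ B, G.Adj u v ∧ e = s(u, v)}

lemma mk_mem_edgeBoundary {B : Set V} {u v : V} :
    s(u, v) ∈ G.edgeBoundary B ↔ G.Adj u v ∧ (u ∈ B ↔ v ∉ B) := by
  constructor
  · rintro ⟨a, ha, b, hb, hab, he⟩
    rcases Sym2.eq_iff.mp he with ⟨rfl, rfl⟩ | ⟨rfl, rfl⟩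
    · exact ⟨hab, by tauto⟩
    · exact ⟨hab.symm, by tauto⟩
  · rintro ⟨huv, hcross⟩
    by_cases hu : u ∈ B
    · exact ⟨u, hu, v, hcross.mp hu, huv, rfl⟩
    · exact ⟨v, by tauto, u, hu, huv.symm, Sym2.eq_swap⟩

lemma deleteEdges_edgeBoundary_adj {B : Set V} {u v : V} :
    (G.deleteEdges (G.edgeBoundary B)).Adj u v ↔ G.Adj u v ∧ (u ∈ B ↔ v ∈ B) := by
  rw [deleteEdges_adj, mk_mem_edgeBoundary]
  tauto

lemma edgeBoundary_finite (hG : ∀ v, (G.neighborSet v).Finite) {B : Set V} (hB : B.Finite) :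
    (G.edgeBoundary B).Finite :=
  (hB.biUnion fun b _ => (hG b).image fun v => s(b, v)).subset <| by
    rintro _ ⟨u, hu, v, -, huv, rfl⟩
    exact Set.mem_biUnion hu ⟨v, huv, rfl⟩

lemma Reachable.mem_of_forall_adj_mem {S : Set V} (hS : ∀ a ∈ S, ∀ b, G.Adj a b → b ∈ S)
    {u v : V} (h : G.Reachable u v) (hu : u ∈ S) : v ∈ S := by
  obtain ⟨p⟩ := h
  induction p with
  | nil => exact hu
  | cons hadj _ ih => exact ih (hS _ hu _ hadj)

lemma supp_connectedComponentMk_eq {S : Set V} {x : V} (hx : x ∈ S)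
    (hS : ∀ a ∈ S, ∀ b, G.Adj a b → b ∈ S) (hreach : ∀ a ∈ S, G.Reachable x a) :
    (G.connectedComponentMk x).supp = S := by
  ext v
  exact ⟨fun hv => (ConnectedComponent.exact hv).symm.mem_of_forall_adj_mem hS hx,
    fun hv => ConnectedComponent.sound (hreach v hv).symm⟩

lemma supp_connectedComponentMk_deleteEdges_edgeBoundary {B : Set V} {x : V} (hx : x ∈ B)
    (hB : (G.induce B).Connected) :
    ((G.deleteEdges (G.edgeBoundary B)).connectedComponentMk x).supp = B := by
  refine supp_connectedComponentMk_eq hx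
    (fun a ha b hab => (deleteEdges_edgeBoundary_adj.mp hab).2.mp ha) fun a ha => ?_
  let φ : G.induce B →g G.deleteEdges (G.edgeBoundary B) :=
    ⟨Subtype.val, fun {a b} h => deleteEdges_edgeBoundary_adj.mpr ⟨h, iff_of_true a.2 b.2⟩⟩
  exact (hB.preconnected ⟨x, hx⟩ ⟨a, ha⟩).map φ

lemma Preconnected.exists_isPath_support_subset {B : Set V} (hB : (G.induce B).Preconnected)
    {u v : V} (hu : u ∈ B) (hv : v ∈ B) :
    ∃ p : G.Walk u v, p.IsPath ∧ ∀ w ∈ p.support, w ∈ B := by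
  classical
  obtain ⟨p⟩ := hB ⟨u, hu⟩ ⟨v, hv⟩
  refine ⟨p.toPath.val.map (Embedding.induce B).toHom,
    p.toPath.2.map Subtype.val_injective, fun w hw => ?_⟩
  erw [Walk.support_map, List.mem_map] at hw
  obtain ⟨w', -, rfl⟩ := hw
  exact w'.2

lemma Walk.dist_le_length_of_mem_support {u v w : V} (p : G.Walk u v) (hw : w ∈ p.support) :
    G.dist u w ≤ p.length := by
  classical
  exact (dist_le _).trans (p.length_takeUntil_le_length hw)

lemma IsAcyclic.eq_of_adj_of_preconnected_induce (hG : G.IsAcyclic) {B : Set V}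
    (hB : (G.induce B).Preconnected) {u₁ u₂ v : V} (hu₁ : u₁ ∈ B) (hu₂ : u₂ ∈ B) (hv : v ∉ B)
    (h₁ : G.Adj u₁ v) (h₂ : G.Adj u₂ v) : u₁ = u₂ := by
  obtain ⟨p, hp, hpB⟩ := hB.exists_isPath_support_subset hu₁ hu₂
  have hmem := hG.mem_support_of_ne_mem_support_of_adj_of_isPath (Path.singleton h₁).2 hp
    h₂.symm fun h => hv (hpB v h)
  simp only [Path.singleton_coe, Walk.support_cons, Walk.support_nil, List.mem_cons,
    List.not_mem_nil, or_false] at hmem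
  rcases hmem with rfl | rfl
  · rfl
  · exact absurd hu₂ hv

lemma IsAcyclic.ncard_edgeBoundary (hG : G.IsAcyclic) {B : Set V}
    (hB : (G.induce B).Preconnected) :
    (G.edgeBoundary B).ncard = {y | y ∉ B ∧ ∃ b ∈ B, G.Adj y b}.ncard := by
  symm
  refine Set.ncard_congr (fun y hy => s(hy.2.choose, y)) (fun y hy => ?_) (fun y z hy hz h => ?_)
    ?_
  · obtain ⟨hb, hby⟩ := hy.2.choose_spec
    exact mk_mem_edgeBoundary.mpr ⟨hby.symm, iff_of_true hb hy.1⟩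
  · rcases Sym2.eq_iff.mp h with ⟨-, h⟩ | ⟨h, -⟩
    · exact h
    · exact absurd (h ▸ hy.2.choose_spec.1) hz.1
  · rintro _ ⟨u, hu, v, hv, huv, rfl⟩
    have hy : v ∉ B ∧ ∃ b ∈ B, G.Adj v b := ⟨hv, u, hu, huv.symm⟩
    obtain ⟨hb, hbv⟩ := hy.2.choose_spec
    exact ⟨v, hy, by rw [hG.eq_of_adj_of_preconnected_induce hB hb hu hv hbv.symm huv]⟩

lemma Preconnected.neighborSet_nontrivial [Nontrivial V] (hG : G.Preconnected) {v : V}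
    (hv : (G.neighborSet v).ncard ≠ 1) : (G.neighborSet v).Nontrivial :=
  (G.neighborSet_nonempty.mpr (hG.not_isIsolated v)).exists_eq_singleton_or_nontrivial
    |>.resolve_left fun ⟨_, h⟩ => hv (by rw [h, Set.ncard_singleton])

/-- The neighbour that is not the penultimate vertex of a geodesic from `x` to `w` is farther. -/
lemma IsTree.exists_adj_dist_lt (hG : G.IsTree) (x : V) {w : V}
    (hw : (G.neighborSet w).Nontrivial) : ∃ a, G.Adj w a ∧ G.dist x w < G.dist x a := by
  obtain ⟨q, hq, hqlen⟩ := hG.connected.exists_path_of_dist x w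
  obtain ⟨a, ha, hne⟩ := hw.exists_ne q.penultimate
  refine ⟨a, ha, ?_⟩
  rcases hG.dist_eq_dist_add_one_of_adj x ha with h | h
  · obtain ⟨r, hr, hrlen⟩ := hG.connected.exists_path_of_dist x a
    have hwr : w ∉ r.support := fun hw => by
      have := r.dist_le_length_of_mem_support hw
      omega
    exact absurd (hG.isAcyclic.eq_penultimate_of_adj_end hq ha
      (hG.isAcyclic.mem_support_of_ne_mem_support_of_adj_of_isPath hq hr ha hwr)) hne
  · omega

lemma IsTree.not_finite_supp_deleteEdges_edgeBoundary (hG : G.IsTree)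
    (hdeg : ∀ v, (G.neighborSet v).Nontrivial) {B : Set V} {x v : V} (hx : x ∈ B)
    (hB : (G.induce B).Connected) (hv : v ∉ B) :
    ¬ ((G.deleteEdges (G.edgeBoundary B)).connectedComponentMk v).supp.Finite := by
  set H := G.deleteEdges (G.edgeBoundary B)
  set K := (H.connectedComponentMk v).supp
  have hsupp := supp_connectedComponentMk_deleteEdges_edgeBoundary hx hB
  have hKB : ∀ k ∈ K, k ∉ B := fun k hk hkB => by
    rw [← hsupp] at hkB hv
    exact hv (hk.symm.trans hkB)
  intro hK
  obtain ⟨w, hwK, hwmax⟩ := Set.exists_max_image K (G.dist x) hK ⟨v, rfl⟩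
  obtain ⟨n, hwn, hdist⟩ := hG.exists_adj_dist_lt x (hdeg w)
  have hnB : n ∈ B := by
    by_contra hnB
    have hnK : n ∈ K := ConnectedComponent.mem_supp_of_adj_mem_supp _ hwK
      (deleteEdges_edgeBoundary_adj.mpr ⟨hwn, iff_of_false (hKB w hwK) hnB⟩)
    exact (hwmax n hnK).not_gt hdist
  obtain ⟨p, hp, hpB⟩ := hB.preconnected.exists_isPath_support_subset hx hnB
  obtain ⟨q, hq, hqlen⟩ := hG.connected.exists_path_of_dist x w
  have hnq : n ∉ q.support := fun hn => by
    have := q.dist_le_length_of_mem_support hn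
    omega
  exact hKB w hwK
    (hpB w (hG.isAcyclic.mem_support_of_ne_mem_support_of_adj_of_isPath hp hq hwn.symm hnq))

end SimpleGraph

lemma IsContour.eq_edgeBoundary {V : Type*} {G : SimpleGraph V} {C : Set (Sym2 V)} {x : V}
    (hC : IsContour G C) (hx : ((G.deleteEdges C).connectedComponentMk x).supp.Finite) :
    C = G.edgeBoundary ((G.deleteEdges C).connectedComponentMk x).supp := by
  set B := ((G.deleteEdges C).connectedComponentMk x).supp
  ext e
  induction e using Sym2.ind with
  | h u v =>
    rw [mk_mem_edgeBoundary]
    constructor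
    · intro he
      refine ⟨hC.2.1 he, by_contra fun hcross => ?_⟩
      -- putting back an edge that does not cross `B` leaves `B` a finite component
      refine hC.2.2.2 _ he ((G.deleteEdges (C \ {s(u, v)})).connectedComponentMk x) ?_
      rw [supp_connectedComponentMk_eq (S := B) rfl]
      · exact hx
      · intro a ha b hab
        rw [deleteEdges_adj] at hab
        by_cases habC : s(a, b) ∈ C
        · have huv : s(a, b) = s(u, v) := by_contra fun h => hab.2 ⟨habC, h⟩
          rcases Sym2.eq_iff.mp huv with ⟨rfl, rfl⟩ | ⟨rfl, rfl⟩ <;> tauto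
        · exact ConnectedComponent.mem_supp_of_adj_mem_supp _ ha
            (deleteEdges_adj.mpr ⟨hab.1, habC⟩)
      · exact fun a ha => (ConnectedComponent.exact ha).symm.mono
          (deleteEdges_anti Set.sdiff_subset)
    · rintro ⟨huv, hcross⟩
      by_contra hnot
      have := ConnectedComponent.mem_supp_congr_adj
        ((G.deleteEdges C).connectedComponentMk x) (deleteEdges_adj.mpr ⟨huv, hnot⟩)
      tauto

lemma SimpleGraph.IsTree.isContour_edgeBoundary {V : Type*} {G : SimpleGraph V} (hG : G.IsTree)
    (hfin : ∀ v, (G.neighborSet v).Finite) (hdeg : ∀ v, (G.neighborSet v).Nontrivial)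
    {B : Set V} {x : V} (hBfin : B.Finite) (hx : x ∈ B) (hB : (G.induce B).Connected) :
    IsContour G (G.edgeBoundary B) := by
  set H := G.deleteEdges (G.edgeBoundary B)
  have hsupp := supp_connectedComponentMk_deleteEdges_edgeBoundary hx hB
  have hinf : ∀ v ∉ B, ¬ (H.connectedComponentMk v).supp.Finite :=
    fun _ => hG.not_finite_supp_deleteEdges_edgeBoundary hdeg hx hB
  have hBfin' : (H.connectedComponentMk x).supp.Finite := by rwa [hsupp]
  refine ⟨edgeBoundary_finite hfin hBfin, ?_, ⟨H.connectedComponentMk x, hBfin', ?_⟩, ?_⟩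
  · rintro _ ⟨u, -, v, -, huv, rfl⟩
    exact huv
  · intro K hK
    obtain ⟨k, rfl⟩ := K.exists_rep
    by_cases hk : k ∈ B
    · rw [← hsupp] at hk
      exact hk
    · exact absurd hK (hinf k hk)
  · rintro _ ⟨u, hu, v, hv, huv, rfl⟩ K hK
    have hle : H ≤ G.deleteEdges (G.edgeBoundary B \ {s(u, v)}) :=
      deleteEdges_anti Set.sdiff_subset
    suffices ∃ y ∉ B, y ∈ K.supp by
      obtain ⟨y, hy, hyK⟩ := this
      exact hinf y hy
        (hK.subset (ConnectedComponent.connectedComponentMk_supp_subset_supp hle K hyK))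
    obtain ⟨k, rfl⟩ := K.exists_rep
    by_cases hk : k ∈ B
    · have hkx : H.connectedComponentMk k = H.connectedComponentMk x := by
        rw [← hsupp] at hk
        exact hk
      have huK : u ∈ (H.connectedComponentMk k).supp := by
        rw [hkx, hsupp]
        exact hu
      refine ⟨v, hv, ConnectedComponent.mem_supp_of_adj_mem_supp _
        (ConnectedComponent.connectedComponentMk_supp_subset_supp hle _ rfl huK) ?_⟩
      exact deleteEdges_adj.mpr ⟨huv, fun h => h.2 rfl⟩
    · exact ⟨k, hk, rfl⟩

/-- For a rooted, locally finite, infinite tree `T` without leaves,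
the map sending a contour `C ∈ F^n_T(x₀)` to its finite component `I_C` is a bijection
onto the set `B^n_T(x₀)` of finite connected vertex sets containing `x₀` whose external
vertex boundary has exactly `n` elements. -/
theorem contours_bij_external_boundaries {V : Type*} (G : SimpleGraph V) (x₀ : V)
    (htree : G.IsTree) (hlocfin : ∀ v : V, (G.neighborSet v).Finite)
    (hinf : Infinite V) (hnoleaf : ∀ v : V, (G.neighborSet v).ncard ≠ 1) (n : ℕ) :
    ∃ f : Set (Sym2 V) → Set V,
      (∀ C ∈ contours G x₀ n, IsInterior G C (f C)) ∧
      Set.BijOn f (contours G x₀ n)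
        {B : Set V | B.Finite ∧ x₀ ∈ B ∧ (G.induce B).Connected ∧
          {y : V | y ∉ B ∧ ∃ b ∈ B, G.Adj y b}.ncard = n} := by
  have hdeg v : (G.neighborSet v).Nontrivial :=
    htree.connected.preconnected.neighborSet_nontrivial (hnoleaf v)
  let I (C : Set (Sym2 V)) : Set V := ((G.deleteEdges C).connectedComponentMk x₀).supp
  refine ⟨I, fun C hC => ⟨hC.2.2, _, rfl⟩, ?_, ?_, ?_⟩
  · rintro C ⟨hC, rfl, hfin⟩
    have hI : (G.induce (I C)).Connected :=
      Connected.mono (G := ((G.deleteEdges C).connectedComponentMk x₀).toSimpleGraph)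
        (fun _ _ h => (deleteEdges_adj.mp h).1) (ConnectedComponent.connected_toSimpleGraph _)
    refine ⟨hfin, rfl, hI, ?_⟩
    rw [← htree.isAcyclic.ncard_edgeBoundary hI.preconnected, ← hC.eq_edgeBoundary hfin]
  · intro C₁ h₁ C₂ h₂ hI
    calc C₁ = G.edgeBoundary (I C₁) := h₁.1.eq_edgeBoundary h₁.2.2
      _ = G.edgeBoundary (I C₂) := congrArg _ hI
      _ = C₂ := (h₂.1.eq_edgeBoundary h₂.2.2).symm
  · rintro B ⟨hBfin, hx₀, hB, rfl⟩
    have hIB : ((G.deleteEdges (G.edgeBoundary B)).connectedComponentMk x₀).supp = B :=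
      supp_connectedComponentMk_deleteEdges_edgeBoundary hx₀ hB
    refine ⟨G.edgeBoundary B, ⟨htree.isContour_edgeBoundary hlocfin hdeg hBfin hx₀ hB,
      htree.isAcyclic.ncard_edgeBoundary hB.preconnected, by rwa [hIB]⟩, hIB⟩
end

section
/- Let T be a locally finite, infinite rooted tree with root x, and suppose every vertex of T has at least r children, where r ≥ 2. Then for all n ≥ 1, |F^n_T(x)| ≤ binom(n + ⌊(n−r)/(r−1)⌋, ⌊(n−r)/(r−1)⌋). -/
open SimpleGraph

/-!
Root the tree at `x` and let `p` be its parent map. The interior `I_C` of a contour `C` is a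
finite set containing `x` and closed under `p`, and `C` consists of the edges from `I_C` to the
children of its vertices that lie outside `I_C`. Call the vertices whose parent lies in `I_C`
its slots: there are `|I_C| - 1 + n` of them and at least `r |I_C|`, whence
`|I_C| - 1 ≤ m := ⌊(n - r) / (r - 1)⌋`.

Order the vertices so that parents precede children (by distance from `x`). The positions,
among the slots, of the slots lying in `I_C` determine `I_C`: the first vertex at which two
interiors differ is a slot of both, at the same position. The last slot is never in `I_C`,
since a vertex of `I_C` has a child, which is a later slot; so after filling in all positions
from `|slots|` to `n + m - 1` we get an `m`-subset of `{0, …, n + m - 1}` from which `|slots|`,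
then `I_C`, then `C` can still be read off.
-/

lemma Nat.sub_one_le_div_of_mul_le {k n r : ℕ} (hr : 2 ≤ r) (h : r * k ≤ (k - 1) + n) :
    k - 1 ≤ (n - r) / (r - 1) := by
  rw [Nat.le_div_iff_mul_le (by omega)]
  obtain ⟨s, rfl⟩ : ∃ s, r = s + 2 := ⟨r - 2, by omega⟩
  obtain _ | k := k
  · simp
  · rw [Nat.add_sub_cancel, show s + 2 - 1 = s + 1 from rfl]
    rw [Nat.add_sub_cancel] at h
    have : (s + 2) * (k + 1) = k * (s + 1) + k + s + 2 := by ring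
    omega

section Padding

variable {A B : Set ℕ} {a b N : ℕ}

lemma union_Ico_inter_Iio (hA : A ⊆ Set.Iio (a - 1)) : (A ∪ Set.Ico a N) ∩ Set.Iio a = A := by
  ext i
  have := @hA i
  simp only [Set.mem_inter_iff, Set.mem_union, Set.mem_Ico, Set.mem_Iio] at this ⊢
  grind

lemma le_of_union_Ico_eq (hB : B ⊆ Set.Iio (b - 1)) (hb : 0 < b) (hbN : b ≤ N)
    (h : A ∪ Set.Ico a N = B ∪ Set.Ico b N) : b ≤ a := by
  by_contra! hab
  have hmem : b - 1 ∈ B ∪ Set.Ico b N := h ▸ Or.inr ⟨by omega, by omega⟩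
  rcases hmem with hB' | hI
  · exact lt_irrefl (b - 1) (hB hB')
  · exact absurd hI.1 (by omega)

lemma eq_of_union_Ico_eq (hA : A ⊆ Set.Iio (a - 1)) (hB : B ⊆ Set.Iio (b - 1)) (ha : 0 < a)
    (hb : 0 < b) (haN : a ≤ N) (hbN : b ≤ N) (h : A ∪ Set.Ico a N = B ∪ Set.Ico b N) :
    A = B := by
  obtain rfl := le_antisymm (le_of_union_Ico_eq hA ha haN h.symm) (le_of_union_Ico_eq hB hb hbN h)
  rw [← union_Ico_inter_Iio (N := N) hA, h, union_Ico_inter_Iio hB]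

lemma ncard_union_Ico (hA : A ⊆ Set.Iio (a - 1)) :
    (A ∪ Set.Ico a N).ncard = A.ncard + (N - a) := by
  have hdisj : Disjoint A (Set.Ico a N) :=
    Set.disjoint_left.2 fun i hi hi' => by have := hA hi; grind
  rw [Set.ncard_union_eq hdisj ((Set.finite_Iio _).subset hA), Set.ncard_Ico_nat]

end Padding

section RootedSubtree

variable {V : Type*} (p : V → V) (x : V)

def children (v : V) : Set V := {u | u ≠ x ∧ p u = v}

def slots (I : Set V) : Set V := {u | u ≠ x ∧ p u ∈ I}

structure IsRootedSubtree (I : Set V) : Prop where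
  finite : I.Finite
  root_mem : x ∈ I
  parent_mem : ∀ u ∈ I, u ≠ x → p u ∈ I

variable {p x} {I : Set V} {r n : ℕ}

namespace IsRootedSubtree

lemma sdiff_singleton_subset_slots (hI : IsRootedSubtree p x I) : I \ {x} ⊆ slots p x I :=
  fun u ⟨hu, hux⟩ => ⟨hux, hI.parent_mem u hu hux⟩

lemma slots_finite (hI : IsRootedSubtree p x I) (hr : 1 ≤ r)
    (hfib : ∀ v, r ≤ (children p x v).ncard) : (slots p x I).Finite :=
  (hI.finite.biUnion fun v _ => Set.finite_of_ncard_pos (s := children p x v)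
    (by have := hfib v; omega)).subset fun _ ⟨hux, hpu⟩ => Set.mem_biUnion hpu ⟨hux, rfl⟩

lemma ncard_slots (hI : IsRootedSubtree p x I) (hS : (slots p x I).Finite) :
    (slots p x I).ncard = (I.ncard - 1) + (slots p x I \ I).ncard := by
  have hinter : slots p x I ∩ I = I \ {x} :=
    Set.Subset.antisymm (fun u ⟨⟨hux, _⟩, hu⟩ => ⟨hu, hux⟩)
      (Set.subset_inter hI.sdiff_singleton_subset_slots Set.sdiff_subset)
  rw [← Set.ncard_inter_add_ncard_sdiff_eq_ncard _ I hS, hinter,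
    Set.ncard_sdiff_singleton_of_mem hI.root_mem]

lemma mul_ncard_le_ncard_slots (hI : IsRootedSubtree p x I) (hS : (slots p x I).Finite)
    (hfib : ∀ v, r ≤ (children p x v).ncard) : r * I.ncard ≤ (slots p x I).ncard := by
  classical
  rw [Set.ncard_eq_toFinset_card _ hI.finite, Set.ncard_eq_toFinset_card _ hS]
  refine Finset.mul_card_image_le_card_of_maps_to (f := p) (fun u hu => ?_) r fun v hv => ?_
  · simpa using ((Set.Finite.mem_toFinset _).1 hu).2
  · rw [Set.Finite.mem_toFinset] at hv
    convert hfib v using 1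
    rw [← Set.ncard_coe_finset]
    congr 1
    ext u
    simp only [Finset.coe_filter, Set.Finite.mem_toFinset, slots, children, Set.mem_ofPred_eq]
    constructor
    · rintro ⟨⟨hux, -⟩, rfl⟩; exact ⟨hux, rfl⟩
    · rintro ⟨hux, rfl⟩; exact ⟨⟨hux, hv⟩, rfl⟩

lemma le_ncard_slots (hI : IsRootedSubtree p x I) (hr : 1 ≤ r)
    (hfib : ∀ v, r ≤ (children p x v).ncard) : r ≤ (slots p x I).ncard :=
  (Nat.le_mul_of_pos_right r ((Set.ncard_pos hI.finite).2 ⟨x, hI.root_mem⟩)).trans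
    (hI.mul_ncard_le_ncard_slots (hI.slots_finite hr hfib) hfib)

lemma ncard_sub_one_le (hI : IsRootedSubtree p x I) (hr : 2 ≤ r)
    (hfib : ∀ v, r ≤ (children p x v).ncard) (hn : (slots p x I \ I).ncard = n) :
    I.ncard - 1 ≤ (n - r) / (r - 1) := by
  have hS := hI.slots_finite (by omega) hfib
  refine Nat.sub_one_le_div_of_mul_le hr ?_
  rw [← hn, ← hI.ncard_slots hS]
  exact hI.mul_ncard_le_ncard_slots hS hfib

lemma ncard_slots_le (hI : IsRootedSubtree p x I) (hr : 2 ≤ r)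
    (hfib : ∀ v, r ≤ (children p x v).ncard) (hn : (slots p x I \ I).ncard = n) :
    (slots p x I).ncard ≤ n + (n - r) / (r - 1) := by
  rw [hI.ncard_slots (hI.slots_finite (by omega) hfib), hn]
  have := hI.ncard_sub_one_le hr hfib hn
  omega

end IsRootedSubtree

end RootedSubtree

section SlotCode

variable {V : Type*} [LinearOrder V]

noncomputable def rankIn (S : Set V) (u : V) : ℕ := (S ∩ Set.Iio u).ncard

lemma rankIn_lt_rankIn {S : Set V} (hS : S.Finite) {u w : V} (hu : u ∈ S) (huw : u < w) :
    rankIn S u < rankIn S w :=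
  Set.ncard_lt_ncard ((Set.ssubset_iff_of_subset
    (Set.inter_subset_inter_right _ (Set.Iio_subset_Iio huw.le))).2
      ⟨u, ⟨hu, huw⟩, fun h => lt_irrefl u h.2⟩) (hS.inter_of_left _)

lemma rankIn_lt_ncard {S : Set V} (hS : S.Finite) {u : V} (hu : u ∈ S) :
    rankIn S u < S.ncard :=
  Set.ncard_lt_ncard ⟨Set.inter_subset_left, fun h => lt_irrefl u (h hu).2⟩ hS

lemma rankIn_injOn {S : Set V} (hS : S.Finite) : S.InjOn (rankIn S) :=
  StrictMonoOn.injOn fun _ hu _ _ huw => rankIn_lt_rankIn hS hu huw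

lemma rankIn_eq_rankIn {S S' : Set V} {u : V} (h : ∀ w < u, w ∈ S ↔ w ∈ S') :
    rankIn S u = rankIn S' u :=
  congrArg Set.ncard (Set.ext fun w => and_congr_left (h w))

variable (p : V → V) (x : V)

noncomputable def slotCode (I : Set V) : Set ℕ := rankIn (slots p x I) '' (I \ {x})

noncomputable def paddedSlotCode (N : ℕ) (I : Set V) : Set ℕ :=
  slotCode p x I ∪ Set.Ico (slots p x I).ncard N

variable {p x} {I I' : Set V} {r n : ℕ}

namespace IsRootedSubtree

lemma ncard_slotCode (hI : IsRootedSubtree p x I) (hS : (slots p x I).Finite) :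
    (slotCode p x I).ncard = I.ncard - 1 := by
  rw [slotCode, ((rankIn_injOn hS).mono hI.sdiff_singleton_subset_slots).ncard_image,
    Set.ncard_sdiff_singleton_of_mem hI.root_mem]

lemma slotCode_subset_Iio (hI : IsRootedSubtree p x I) (hp : ∀ u, u ≠ x → p u < u)
    (hr : 1 ≤ r) (hfib : ∀ v, r ≤ (children p x v).ncard) :
    slotCode p x I ⊆ Set.Iio ((slots p x I).ncard - 1) := by
  have hS := hI.slots_finite hr hfib
  rintro _ ⟨u, hu, rfl⟩
  obtain ⟨c, hcx, rfl⟩ : (children p x u).Nonempty :=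
    Set.nonempty_of_ncard_ne_zero (by have := hfib u; omega)
  have hlt := rankIn_lt_rankIn hS (hI.sdiff_singleton_subset_slots hu) (hp c hcx)
  have hle := rankIn_lt_ncard hS (show c ∈ slots p x I from ⟨hcx, hu.1⟩)
  exact Nat.lt_sub_of_add_lt (by omega)

lemma slotCode_ne_of_mem_of_notMem (hI : IsRootedSubtree p x I) (hI' : IsRootedSubtree p x I')
    (hp : ∀ u, u ≠ x → p u < u) (hS' : (slots p x I').Finite) {u : V} (hu : u ∈ I)
    (hu' : u ∉ I') (hbelow : ∀ w < u, w ∈ I ↔ w ∈ I') :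
    slotCode p x I ≠ slotCode p x I' := by
  intro h
  have hux : u ≠ x := fun e => hu' (e ▸ hI'.root_mem)
  have huS' : u ∈ slots p x I' := ⟨hux, (hbelow _ (hp u hux)).1 (hI.parent_mem u hu hux)⟩
  have hrank : rankIn (slots p x I) u = rankIn (slots p x I') u :=
    rankIn_eq_rankIn fun w hw => and_congr_right fun hwx => hbelow _ ((hp w hwx).trans hw)
  obtain ⟨w, hw, hwu⟩ : rankIn (slots p x I) u ∈ slotCode p x I' :=
    h ▸ ⟨u, ⟨hu, hux⟩, rfl⟩
  rw [hrank] at hwu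
  exact hu' (rankIn_injOn hS' (hI'.sdiff_singleton_subset_slots hw) huS' hwu ▸ hw.1)

open scoped symmDiff in
lemma eq_of_slotCode_eq (hI : IsRootedSubtree p x I) (hI' : IsRootedSubtree p x I')
    (hp : ∀ u, u ≠ x → p u < u) (hS : (slots p x I).Finite) (hS' : (slots p x I').Finite)
    (h : slotCode p x I = slotCode p x I') : I = I' := by
  by_contra hne
  obtain ⟨u, hu, hmin⟩ :=
    ((hI.finite.union hI'.finite).subset Set.symmDiff_subset_union).exists_minimal
      (Set.symmDiff_nonempty.2 hne)
  have hbelow : ∀ w < u, w ∈ I ↔ w ∈ I' := fun w hw => by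
    by_contra hiff
    exact hw.not_ge (hmin (Set.mem_symmDiff.2 (by tauto)) hw.le)
  rcases Set.mem_symmDiff.1 hu with ⟨hu, hu'⟩ | ⟨hu', hu⟩
  · exact hI.slotCode_ne_of_mem_of_notMem hI' hp hS' hu hu' hbelow h
  · exact hI'.slotCode_ne_of_mem_of_notMem hI hp hS hu' hu
      (fun w hw => (hbelow w hw).symm) h.symm

lemma paddedSlotCode_mem (hI : IsRootedSubtree p x I) (hp : ∀ u, u ≠ x → p u < u)
    (hr : 2 ≤ r) (hfib : ∀ v, r ≤ (children p x v).ncard) (hn : (slots p x I \ I).ncard = n) :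
    paddedSlotCode p x (n + (n - r) / (r - 1)) I ∈
      {P ⊆ Set.Iio (n + (n - r) / (r - 1)) | P.ncard = (n - r) / (r - 1)} := by
  have hS := hI.slots_finite (by omega) hfib
  have hsub := hI.slotCode_subset_Iio hp (by omega) hfib
  have hle := hI.ncard_slots_le hr hfib hn
  refine ⟨Set.union_subset (hsub.trans (Set.Iio_subset_Iio (by omega)))
    Set.Ico_subset_Iio_self, ?_⟩
  have hj := hI.ncard_sub_one_le hr hfib hn
  have hrS := hI.le_ncard_slots (by omega) hfib
  rw [paddedSlotCode, ncard_union_Ico hsub, hI.ncard_slotCode hS]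
  rw [hI.ncard_slots hS, hn] at hrS hle ⊢
  omega

lemma eq_of_paddedSlotCode_eq (hI : IsRootedSubtree p x I) (hI' : IsRootedSubtree p x I')
    (hp : ∀ u, u ≠ x → p u < u) (hr : 2 ≤ r) (hfib : ∀ v, r ≤ (children p x v).ncard)
    (hn : (slots p x I \ I).ncard = n) (hn' : (slots p x I' \ I').ncard = n)
    (h : paddedSlotCode p x (n + (n - r) / (r - 1)) I =
      paddedSlotCode p x (n + (n - r) / (r - 1)) I') : I = I' :=
  hI.eq_of_slotCode_eq hI' hp (hI.slots_finite (by omega) hfib) (hI'.slots_finite (by omega) hfib)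
    (eq_of_union_Ico_eq (hI.slotCode_subset_Iio hp (by omega) hfib)
      (hI'.slotCode_subset_Iio hp (by omega) hfib)
      (by have := hI.le_ncard_slots (by omega) hfib; omega)
      (by have := hI'.le_ncard_slots (by omega) hfib; omega)
      (hI.ncard_slots_le hr hfib hn) (hI'.ncard_slots_le hr hfib hn') h)

end IsRootedSubtree

end SlotCode

namespace SimpleGraph

variable {V : Type*} {G : SimpleGraph V} {x u v : V} {C : Set (Sym2 V)}

open Classical in
/-- The neighbour of `u` one step closer to `x`; junk value `u` when there is none, e.g. at `x`. -/
noncomputable def parent (G : SimpleGraph V) (x u : V) : V :=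
  if h : ∃ v, G.Adj v u ∧ G.dist x u = G.dist x v + 1 then h.choose else u

lemma Connected.exists_adj_dist_eq_add_one (hG : G.Connected) (hu : u ≠ x) :
    ∃ v, G.Adj v u ∧ G.dist x u = G.dist x v + 1 := by
  obtain ⟨p, hp⟩ := hG.exists_walk_length_eq_dist u x
  obtain ⟨v, huv, q, rfl⟩ := Walk.exists_eq_cons_of_ne hu p
  have hlen : G.dist x v + 1 ≤ G.dist x u := by
    rw [dist_comm (u := x) (v := u), ← hp, Walk.length_cons, dist_comm]
    exact Nat.succ_le_succ (dist_le q)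
  refine ⟨v, huv.symm, ?_⟩
  rcases huv.symm.diff_dist_adj (u := x) with h | h | h <;> omega

lemma Connected.parent_spec (hG : G.Connected) (hu : u ≠ x) :
    G.Adj (G.parent x u) u ∧ G.dist x u = G.dist x (G.parent x u) + 1 := by
  have h := hG.exists_adj_dist_eq_add_one hu
  rw [parent, dif_pos h]
  exact h.choose_spec

lemma IsTree.exists_eq_concat (hT : G.IsTree) (hv : G.Adj v u)
    (hd : G.dist x u = G.dist x v + 1) {p : G.Walk x u} (hp : p.IsPath) :
    ∃ q : G.Walk x v, p = q.concat hv := by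
  obtain ⟨q, -, hq⟩ := hT.connected.exists_path_of_dist x v
  refine ⟨q, (hT.existsUnique_path x u).unique hp ?_⟩
  exact (q.concat hv).isPath_of_length_eq_dist (by rw [Walk.length_concat, hq, hd])

lemma IsTree.parent_eq (hT : G.IsTree) (hv : G.Adj v u) (hd : G.dist x u = G.dist x v + 1) :
    G.parent x u = v := by
  have hu : u ≠ x := by rintro rfl; simp at hd
  obtain ⟨hw, hdw⟩ := hT.connected.parent_spec hu
  obtain ⟨p, hp, -⟩ := hT.connected.exists_path_of_dist x u
  obtain ⟨q, rfl⟩ := hT.exists_eq_concat hv hd hp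
  obtain ⟨q', hq'⟩ := hT.exists_eq_concat hw hdw hp
  exact (Walk.concat_inj hq').1.symm

lemma IsTree.parent_mem_support (hT : G.IsTree) (hu : u ≠ x) {p : G.Walk x u} (hp : p.IsPath) :
    G.parent x u ∈ p.support := by
  obtain ⟨hw, hdw⟩ := hT.connected.parent_spec hu
  obtain ⟨q, rfl⟩ := hT.exists_eq_concat hw hdw hp
  simp [Walk.support_concat]

lemma IsTree.parent_eq_or_parent_eq (hT : G.IsTree) {a b : V} (h : G.Adj a b) :
    (b ≠ x ∧ G.parent x b = a) ∨ (a ≠ x ∧ G.parent x a = b) := by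
  rcases hT.dist_eq_dist_add_one_of_adj x h with hd | hd
  · exact Or.inr ⟨by rintro rfl; simp at hd, hT.parent_eq h.symm hd⟩
  · exact Or.inl ⟨by rintro rfl; simp at hd, hT.parent_eq h hd⟩

lemma IsTree.setOf_adj_dist_eq_children (hT : G.IsTree) (x v : V) :
    {u | G.Adj v u ∧ G.dist x u = G.dist x v + 1} = children (G.parent x) x v := by
  ext u
  constructor
  · rintro ⟨h, hd⟩
    exact ⟨by rintro rfl; simp at hd, hT.parent_eq h hd⟩
  · rintro ⟨hu, rfl⟩
    exact hT.connected.parent_spec hu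

lemma Connected.exists_linearOrder_parent_lt (hG : G.Connected) (x : V) :
    ∃ _ : LinearOrder V, ∀ u, u ≠ x → G.parent x u < u := by
  let key : V → ℕ ×ₗ Cardinal := fun u => toLex (G.dist x u, embeddingToCardinal u)
  have hkey : Function.Injective key := fun a b h =>
    embeddingToCardinal.injective (congrArg Prod.snd (toLex.injective h))
  refine ⟨LinearOrder.lift' key hkey, fun u hu => ?_⟩
  show key (G.parent x u) < key u
  exact Prod.Lex.toLex_lt_toLex.2 (Or.inl (by have := (hG.parent_spec hu).2; omega))

lemma Reachable.mem_of_adj_mem {H : SimpleGraph V} {S : Set V} {a b : V}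
    (hS : ∀ c d, c ∈ S → H.Adj c d → d ∈ S) (h : H.Reachable a b) (ha : a ∈ S) :
    b ∈ S := by
  obtain ⟨w⟩ := h
  induction w with
  | nil => exact ha
  | cons hadj _ ih => exact ih (hS _ _ ha hadj)

def contourInterior (G : SimpleGraph V) (x : V) (C : Set (Sym2 V)) : Set V :=
  ((G.deleteEdges C).connectedComponentMk x).supp

lemma mem_contourInterior_iff {u : V} :
    u ∈ G.contourInterior x C ↔ (G.deleteEdges C).Reachable x u := by
  rw [contourInterior, ConnectedComponent.mem_supp_iff, ConnectedComponent.eq]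
  exact ⟨Reachable.symm, Reachable.symm⟩

lemma self_mem_contourInterior : x ∈ G.contourInterior x C := rfl

lemma mem_contourInterior_of_adj {a b : V} (ha : a ∈ G.contourInterior x C)
    (hab : G.Adj a b) (he : s(a, b) ∉ C) : b ∈ G.contourInterior x C :=
  ConnectedComponent.mem_supp_of_adj_mem_supp _ ha (deleteEdges_adj.2 ⟨hab, he⟩)

lemma mk_mem_of_mem_contourInterior {a b : V} (hab : G.Adj a b)
    (ha : a ∈ G.contourInterior x C) (hb : b ∉ G.contourInterior x C) : s(a, b) ∈ C := by
  by_contra he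
  exact hb (mem_contourInterior_of_adj ha hab he)

lemma IsContour.xor_mem_contourInterior (hC : IsContour G C)
    (hfin : (G.contourInterior x C).Finite) {a b : V} (he : s(a, b) ∈ C) :
    Xor (a ∈ G.contourInterior x C) (b ∈ G.contourInterior x C) := by
  rw [xor_iff_not_iff]
  intro hiff
  -- Otherwise putting `s(a, b)` back does not enlarge the component of `x`, against minimality.
  refine hC.2.2.2 _ he ((G.deleteEdges (C \ {s(a, b)})).connectedComponentMk x)
    (hfin.subset fun w hw => ?_)
  refine Reachable.mem_of_adj_mem (fun c d hc hcd => ?_) (ConnectedComponent.exact hw).symm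
    self_mem_contourInterior
  rw [deleteEdges_adj] at hcd
  by_cases hcdC : s(c, d) ∈ C
  · have hcd_eq : s(c, d) = s(a, b) := not_not.1 fun h => hcd.2 ⟨hcdC, h⟩
    obtain ⟨rfl, rfl⟩ | ⟨rfl, rfl⟩ := Sym2.eq_iff.1 hcd_eq
    · exact hiff.1 hc
    · exact hiff.2 hc
  · exact mem_contourInterior_of_adj hc hcd.1 hcdC

lemma IsContour.exists_eq_mk_of_mem (hC : IsContour G C) (hfin : (G.contourInterior x C).Finite)
    {e : Sym2 V} (he : e ∈ C) : ∃ a b, e = s(a, b) ∧ G.Adj a b ∧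
      a ∈ G.contourInterior x C ∧ b ∉ G.contourInterior x C := by
  induction e using Sym2.ind with
  | _ a b =>
  rcases hC.xor_mem_contourInterior hfin he with ⟨ha, hb⟩ | ⟨hb, ha⟩
  · exact ⟨a, b, rfl, hC.2.1 he, ha, hb⟩
  · exact ⟨b, a, Sym2.eq_swap, (hC.2.1 he).symm, hb, ha⟩

lemma IsContour.subset_of_contourInterior_eq {C' : Set (Sym2 V)} (hC : IsContour G C)
    (hfin : (G.contourInterior x C).Finite)
    (h : G.contourInterior x C = G.contourInterior x C') : C ⊆ C' := fun e he => by
  obtain ⟨a, b, rfl, hab, ha, hb⟩ := hC.exists_eq_mk_of_mem hfin he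
  exact mk_mem_of_mem_contourInterior hab (h ▸ ha) (h ▸ hb)

lemma IsContour.eq_of_contourInterior_eq {C' : Set (Sym2 V)} (hC : IsContour G C)
    (hC' : IsContour G C') (hfin : (G.contourInterior x C).Finite)
    (h : G.contourInterior x C = G.contourInterior x C') : C = C' :=
  (hC.subset_of_contourInterior_eq hfin h).antisymm
    (hC'.subset_of_contourInterior_eq (h ▸ hfin) h.symm)

lemma IsTree.parent_mem_contourInterior (hT : G.IsTree) :
    ∀ u ∈ G.contourInterior x C, u ≠ x → G.parent x u ∈ G.contourInterior x C := by
  classical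
  intro u hu hux
  obtain ⟨p, hp⟩ := (mem_contourInterior_iff.1 hu).exists_isPath
  have hmem : G.parent x u ∈ p.support := by
    rw [← Walk.support_mapLe_eq_support (G.deleteEdges_le C)]
    exact hT.parent_mem_support hux (hp.mapLe _)
  exact mem_contourInterior_iff.2 ⟨p.takeUntil _ hmem⟩

lemma IsTree.image_slots_sdiff_contourInterior (hT : G.IsTree) (hC : IsContour G C)
    (hfin : (G.contourInterior x C).Finite) :
    (fun u => s(G.parent x u, u)) '' (slots (G.parent x) x (G.contourInterior x C) \
      G.contourInterior x C) = C := by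
  refine Set.Subset.antisymm ?_ fun e he => ?_
  · rintro _ ⟨u, ⟨⟨hux, hpu⟩, hu⟩, rfl⟩
    exact mk_mem_of_mem_contourInterior (hT.connected.parent_spec hux).1 hpu hu
  · obtain ⟨a, b, rfl, hab, ha, hb⟩ := hC.exists_eq_mk_of_mem hfin he
    rcases hT.parent_eq_or_parent_eq (x := x) hab with ⟨hbx, hpb⟩ | ⟨hax, hpa⟩
    · exact ⟨b, ⟨⟨hbx, hpb ▸ ha⟩, hb⟩, by simp only [hpb]⟩
    · exact absurd (hpa ▸ hT.parent_mem_contourInterior a ha hax) hb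

lemma IsTree.ncard_slots_sdiff_contourInterior (hT : G.IsTree) (hC : IsContour G C)
    (hfin : (G.contourInterior x C).Finite) :
    (slots (G.parent x) x (G.contourInterior x C) \ G.contourInterior x C).ncard = C.ncard := by
  conv_rhs => rw [← hT.image_slots_sdiff_contourInterior hC hfin]
  refine (Set.InjOn.ncard_image ?_).symm
  rintro u ⟨⟨-, hpu⟩, -⟩ w ⟨-, hw⟩ h
  rcases Sym2.eq_iff.1 h with ⟨-, h⟩ | ⟨rfl, -⟩
  · exact h
  · exact absurd hpu hw

lemma IsTree.isRootedSubtree_contourInterior (hT : G.IsTree) {n : ℕ}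
    (hC : C ∈ contours G x n) :
    IsRootedSubtree (G.parent x) x (G.contourInterior x C) :=
  ⟨hC.2.2, self_mem_contourInterior, hT.parent_mem_contourInterior⟩

end SimpleGraph

theorem card_contours_le_binom_general {V : Type*} (G : SimpleGraph V) (x : V) (r : ℕ) (hr : 2 ≤ r)
    (htree : G.IsTree)
    (hchild : ∀ v : V, r ≤ {u : V | G.Adj v u ∧ G.dist x u = G.dist x v + 1}.ncard)
    (n : ℕ) :
    (contours G x n).encard ≤ ((n + (n - r) / (r - 1)).choose ((n - r) / (r - 1)) : ℕ) := by
  obtain ⟨_, hlt⟩ := htree.connected.exists_linearOrder_parent_lt x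
  have hfib : ∀ v, r ≤ (children (G.parent x) x v).ncard := fun v =>
    htree.setOf_adj_dist_eq_children x v ▸ hchild v
  have hsub : ∀ C ∈ contours G x n, IsRootedSubtree (G.parent x) x (G.contourInterior x C) :=
    fun C hC => htree.isRootedSubtree_contourInterior hC
  have hbdry : ∀ C ∈ contours G x n,
      (slots (G.parent x) x (G.contourInterior x C) \ G.contourInterior x C).ncard = n :=
    fun C hC => (htree.ncard_slots_sdiff_contourInterior hC.1 hC.2.2).trans hC.2.1
  set m := (n - r) / (r - 1)
  have hcodes : {P ⊆ Set.Iio (n + m) | P.ncard = m}.Finite :=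
    (Set.finite_Iio _).finite_subsets.subset fun _ h => h.1
  calc (contours G x n).encard ≤ {P ⊆ Set.Iio (n + m) | P.ncard = m}.encard := by
        refine Set.encard_le_encard_of_injOn
          (f := fun C => paddedSlotCode (G.parent x) x (n + m) (G.contourInterior x C))
          (fun C hC => (hsub C hC).paddedSlotCode_mem hlt hr hfib (hbdry C hC))
          fun C hC C' hC' h => hC.1.eq_of_contourInterior_eq hC'.1 hC.2.2 ?_
        exact (hsub C hC).eq_of_paddedSlotCode_eq (hsub C' hC') hlt hr hfib (hbdry C hC)
          (hbdry C' hC') h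
    _ = ((n + m).choose m : ℕ) := by
        rw [← hcodes.cast_ncard_eq, Set.ncard_powerset_ncard (Set.finite_Iio _),
          Set.ncard_Iio_nat]

/-- If `T` is a locally finite, infinite rooted tree with root `x` in which
every vertex has at least `r ≥ 2` children, then for all `n ≥ 1`,
`|F^n_T(x)| ≤ binom(n + ⌊(n-r)/(r-1)⌋, ⌊(n-r)/(r-1)⌋)` (floors are natural-number division
with truncated subtraction). -/
theorem card_contours_le_binom {V : Type*} (G : SimpleGraph V) (x : V) (r : ℕ) (hr : 2 ≤ r)
    (htree : G.IsTree) (hlocfin : ∀ v : V, (G.neighborSet v).Finite) (hinf : Infinite V)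
    (hchild : ∀ v : V, r ≤ {u : V | G.Adj v u ∧ G.dist x u = G.dist x v + 1}.ncard)
    (n : ℕ) (hn : 1 ≤ n) :
    (contours G x n).encard ≤ ((n + (n - r) / (r - 1)).choose ((n - r) / (r - 1)) : ℕ) :=
  card_contours_le_binom_general G x r hr htree hchild n
end

section
/- Let T be a locally finite, infinite rooted tree in which every vertex has at least r children, where r ≥ 2, and let C be a contour of T of size n with finite component I_C. Then the number of vertices of I_C is at most (n−1)/(r−1), and hence the number of edges of the subtree induced on I_C is at most (n−r)/(r−1). -/
open SimpleGraph

/-!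
The finite component `I` of `G \ C` is connected, so it spans a subtree of `G` and
`|E(I)| + 1 = |I|`. Each vertex of `I` has at least `r` children, and the edges to them are
pairwise distinct because an edge determines its endpoint nearer to the root. Such an edge either
lies in `E(I)` or leaves `I`, in which case it belongs to `C`. Hence
`r |I| ≤ |E(I)| + n = |I| - 1 + n`.
-/

namespace SimpleGraph

variable {V : Type*} (G : SimpleGraph V)

def children (x v : V) : Set V := {u | G.Adj v u ∧ G.dist x u = G.dist x v + 1}

def edgesWithin (s : Set V) : Set (Sym2 V) := {e | e ∈ G.edgeSet ∧ ∀ v ∈ e, v ∈ s}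

lemma image_edgeSet_induce (s : Set V) :
    Sym2.map (↑) '' (G.induce s).edgeSet = G.edgesWithin s := by
  ext e
  induction e using Sym2.ind with
  | _ a b =>
    constructor
    · rintro ⟨e', he', heq⟩
      induction e' using Sym2.ind with
      | _ p q =>
        simp only [Sym2.map_mk] at heq
        rw [← heq]
        refine ⟨G.mem_edgeSet.2 ((G.induce s).mem_edgeSet.1 he'), fun v hv => ?_⟩
        rcases Sym2.mem_iff.1 hv with rfl | rfl
        exacts [p.2, q.2]
    · rintro ⟨he, hs⟩
      exact ⟨s(⟨a, hs a (Sym2.mem_mk_left a b)⟩, ⟨b, hs b (Sym2.mem_mk_right a b)⟩),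
        he, rfl⟩

lemma ncard_edgesWithin (s : Set V) :
    (G.edgesWithin s).ncard = Nat.card (G.induce s).edgeSet := by
  rw [← image_edgeSet_induce, Set.ncard_image_of_injective _
    (Sym2.map.injective Subtype.val_injective), Nat.card_coe_set_eq]

lemma edgesWithin_finite {s : Set V} (hs : s.Finite) : (G.edgesWithin s).Finite := by
  have : Finite s := hs
  rw [← image_edgeSet_induce]
  exact (Set.toFinite _).image _

lemma IsAcyclic.ncard_edgesWithin_add_one {G : SimpleGraph V} (hG : G.IsAcyclic) {s : Set V}
    (hs : s.Finite) (hconn : (G.induce s).Connected) :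
    (G.edgesWithin s).ncard + 1 = s.ncard := by
  have : Finite s := hs
  rw [ncard_edgesWithin, ← Nat.card_coe_set_eq]
  exact (isTree_iff_connected_and_card.1 ⟨hconn, hG.embedding (Embedding.induce s)⟩).2

lemma ConnectedComponent.connected_induce_supp_of_le {H : SimpleGraph V} (hle : H ≤ G)
    (K : H.ConnectedComponent) : (G.induce K.supp).Connected :=
  K.connected_toSimpleGraph.mono fun _ _ h => hle h

lemma ConnectedComponent.mk_mem_edgesWithin_supp_union {C : Set (Sym2 V)}
    (K : (G.deleteEdges C).ConnectedComponent) {v u : V} (hv : v ∈ K.supp) (hadj : G.Adj v u) :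
    s(v, u) ∈ G.edgesWithin K.supp ∪ C := by
  by_cases hu : u ∈ K.supp
  · refine Or.inl ⟨G.mem_edgeSet.2 hadj, fun w hw => ?_⟩
    rcases Sym2.mem_iff.1 hw with rfl | rfl
    exacts [hv, hu]
  · by_contra h
    exact hu (K.mem_supp_of_adj_mem_supp hv (deleteEdges_adj.2 ⟨hadj, fun hC => h (Or.inr hC)⟩))

lemma eq_of_mk_eq_mk_of_mem_children {x v v' u u' : V} (hu : u ∈ G.children x v)
    (hu' : u' ∈ G.children x v') (h : s(v, u) = s(v', u')) : v = v' := by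
  rcases Sym2.eq_iff.1 h with ⟨rfl, -⟩ | ⟨rfl, rfl⟩
  · rfl
  · have := hu.2; have := hu'.2; omega

lemma ncard_mul_le_ncard_of_children_subset (x : V) {r : ℕ} {s : Set V} {T : Set (Sym2 V)}
    (hs : s.Finite) (hT : T.Finite) (hchild : ∀ v ∈ s, r ≤ (G.children x v).ncard)
    (hsub : ∀ v ∈ s, ∀ u ∈ G.children x v, s(v, u) ∈ T) : s.ncard * r ≤ T.ncard := by
  classical
  let R : V → Sym2 V → Prop := fun v e => ∃ u ∈ G.children x v, e = s(v, u)
  rw [Set.ncard_eq_toFinset_card _ hs, Set.ncard_eq_toFinset_card _ hT,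
    ← mul_one hT.toFinset.card]
  refine Finset.card_mul_le_card_mul R (fun v hv => ?_) (fun e _ => ?_)
  · rw [Set.Finite.mem_toFinset] at hv
    rw [← Set.ncard_coe_finset, Finset.coe_bipartiteAbove]
    refine (hchild v hv).trans (Set.ncard_le_ncard_of_injOn (fun u => s(v, u))
      (fun u hu => ⟨(Set.Finite.mem_toFinset _).2 (hsub v hv u hu), u, hu, rfl⟩)
      (fun u _ u' _ h => Sym2.congr_right.1 h) (Set.toFinite _))
  · refine Finset.card_le_one.2 fun v hv v' hv' => ?_
    obtain ⟨-, u, hu, rfl⟩ := (Finset.mem_bipartiteBelow R).1 hv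
    obtain ⟨-, u', hu', h⟩ := (Finset.mem_bipartiteBelow R).1 hv'
    exact G.eq_of_mk_eq_mk_of_mem_children hu hu' h

end SimpleGraph

theorem interior_card_le_general {V : Type*} (G : SimpleGraph V) (x : V) (r : ℕ) (hr : 2 ≤ r)
    (htree : G.IsTree)
    (hchild : ∀ v : V, r ≤ {u : V | G.Adj v u ∧ G.dist x u = G.dist x v + 1}.ncard)
    (C : Set (Sym2 V)) (n : ℕ) (hC : IsContour G C) (hcard : C.ncard = n)
    (I : Set V) (hI : IsInterior G C I) :
    (I.ncard : ℚ) ≤ ((n : ℚ) - 1) / ((r : ℚ) - 1) ∧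
    ({e : Sym2 V | e ∈ G.edgeSet ∧ ∀ v ∈ e, v ∈ I}.ncard : ℚ) ≤
      ((n : ℚ) - (r : ℚ)) / ((r : ℚ) - 1) := by
  obtain ⟨hIfin, K, rfl⟩ := hI
  change _ ∧ ((G.edgesWithin K.supp).ncard : ℚ) ≤ _
  have hsubtree : (G.edgesWithin K.supp).ncard + 1 = K.supp.ncard :=
    htree.isAcyclic.ncard_edgesWithin_add_one hIfin
      (K.connected_induce_supp_of_le G (G.deleteEdges_le C))
  have hcount : K.supp.ncard * r ≤ (G.edgesWithin K.supp).ncard + n :=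
    calc K.supp.ncard * r ≤ (G.edgesWithin K.supp ∪ C).ncard :=
          G.ncard_mul_le_ncard_of_children_subset x hIfin
            ((G.edgesWithin_finite hIfin).union hC.1) (fun v _ => hchild v)
            (fun v hv u hu => K.mk_mem_edgesWithin_supp_union G hv hu.1)
      _ ≤ (G.edgesWithin K.supp).ncard + n := hcard ▸ Set.ncard_union_le _ _
  have hsubtreeQ : ((G.edgesWithin K.supp).ncard : ℚ) + 1 = K.supp.ncard := by
    exact_mod_cast hsubtree
  have hcountQ : (K.supp.ncard : ℚ) * r ≤ (G.edgesWithin K.supp).ncard + n := by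
    exact_mod_cast hcount
  have hr' : (1 : ℚ) < r := by exact_mod_cast hr
  constructor <;> rw [le_div_iff₀ (by linarith)] <;> nlinarith

/-- If `T` is a locally finite, infinite rooted tree in which every vertex
has at least `r ≥ 2` children, and `C` is a contour of size `n` with finite component `I`,
then `|I| ≤ (n-1)/(r-1)` and the number of edges of the subtree induced on `I` is at most
`(n-r)/(r-1)`. -/
theorem interior_card_le {V : Type*} (G : SimpleGraph V) (x : V) (r : ℕ) (hr : 2 ≤ r)
    (htree : G.IsTree) (hlocfin : ∀ v : V, (G.neighborSet v).Finite) (hinf : Infinite V)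
    (hchild : ∀ v : V, r ≤ {u : V | G.Adj v u ∧ G.dist x u = G.dist x v + 1}.ncard)
    (C : Set (Sym2 V)) (n : ℕ) (hC : IsContour G C) (hcard : C.ncard = n)
    (I : Set V) (hI : IsInterior G C I) :
    (I.ncard : ℚ) ≤ ((n : ℚ) - 1) / ((r : ℚ) - 1) ∧
    ({e : Sym2 V | e ∈ G.edgeSet ∧ ∀ v ∈ e, v ∈ I}.ncard : ℚ) ≤
      ((n : ℚ) - (r : ℚ)) / ((r : ℚ) - 1) :=
  interior_card_le_general G x r hr htree hchild C n hC hcard I hI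
end
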